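/- Let n be a natural number and a, b, c, d real numbers such that all Pochhammer symbols (c)_k, (d)_k, (a−c−n+1)_k are nonzero for 0 ≤ k ≤ n. Then ∑_{k=0}^n [(−n)_k (a)_k (b)_k]/[(c)_k (d)_k k!] = [(c−a)_n]/[(c)_n] · ∑_{k=0}^n [(−n)_k (a)_k (d−b)_k]/[(d)_k (a−c−n+1)_k k!]. -/

import Mathlib

/-!
Clearing denominators with `(c)ₙ = (c)ₖ (c+k)ₙ₋ₖ` and `(-n)ₖ / k! = (-1)ᵏ C(n,k)` turns both sides
into polynomial sums. On the right, expand `(d-b)ₖ` by Chu–Vandermonde and exchange the two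
summations: the inner sum collapses, by Chu–Vandermonde again, to `(1-c-n)ₙ₋ⱼ = (-1)ⁿ⁻ʲ (c+j)ₙ₋ⱼ`,
which makes the right-hand sum `(-1)ⁿ` times the left-hand one. The prefactors match because
`(a-c-n+1)ₙ = (-1)ⁿ (c-a)ₙ`.
-/

/-- The Pochhammer symbol `(a)_k = a (a+1) ⋯ (a+k-1)` over ℝ. -/
noncomputable def poch (a : ℝ) (k : ℕ) : ℝ := (ascPochhammer ℝ k).eval a

open Finset Polynomial

lemma descPochhammer_smeval_eq_poch (r : ℝ) (k : ℕ) :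
    (descPochhammer ℤ k).smeval r = poch (r - k + 1) k := by
  rw [descPochhammer_smeval_eq_ascPochhammer, ascPochhammer_smeval_eq_eval, poch]

lemma poch_add (x : ℝ) (m l : ℕ) : poch x (m + l) = poch x m * poch (x + m) l := by
  simp [poch, ← ascPochhammer_mul, eval_comp]

lemma poch_eq_mul_poch_of_le (x : ℝ) {k n : ℕ} (h : k ≤ n) :
    poch x n = poch x k * poch (x + k) (n - k) := by
  rw [← poch_add, Nat.add_sub_cancel' h]

lemma poch_eq_neg_one_pow_mul_poch (x : ℝ) (m : ℕ) :
    poch x m = (-1) ^ m * poch (1 - x - m) m := by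
  conv_lhs => rw [poch, ← neg_neg x]
  rw [ascPochhammer_eval_neg_eq_descPochhammer, descPochhammer_eval_eq_ascPochhammer, poch]
  ring_nf

lemma poch_neg_natCast (n k : ℕ) : poch (-n) k = (-1) ^ k * n.descFactorial k := by
  rw [poch, ascPochhammer_eval_neg_eq_descPochhammer, descPochhammer_eval_eq_descFactorial]

/-- Chu–Vandermonde for falling factorials `x^{(j)} = x (x-1) ⋯ (x-j+1)`, read through
`(-1)ʲ (B)ⱼ = (-B)^{(j)}` and `(D+j)ₖ₋ⱼ = (D+k-1)^{(k-j)}`. -/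
lemma poch_sub_eq_sum (B D : ℝ) (k : ℕ) :
    poch (D - B) k =
      ∑ j ∈ range (k + 1), (-1) ^ j * k.choose j * poch B j * poch (D + j) (k - j) := by
  have h := Ring.descPochhammer_smeval_add (r := -B) (s := D + k - 1) k (Commute.all _ _)
  rw [descPochhammer_smeval_eq_poch, Nat.sum_antidiagonal_eq_sum_range_succ (fun i j =>
    (k.choose i : ℝ) * ((descPochhammer ℤ i).smeval (-B) *
      (descPochhammer ℤ j).smeval (D + k - 1)))] at h
  convert h using 2 with j hj
  · ring
  · have hjk : j ≤ k := Nat.lt_succ_iff.mp (mem_range.mp hj)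
    rw [descPochhammer_smeval_eq_poch, descPochhammer_smeval_eq_poch,
      poch_eq_neg_one_pow_mul_poch (-B - j + 1), Nat.cast_sub hjk]
    ring_nf

lemma sum_range_sum_range_comm {M : Type*} [AddCommMonoid M] (f : ℕ → ℕ → M) (n : ℕ) :
    ∑ k ∈ range (n + 1), ∑ j ∈ range (k + 1), f k j =
      ∑ j ∈ range (n + 1), ∑ m ∈ range (n + 1 - j), f (j + m) j := by
  have h := sum_Ico_Ico_comm 0 (n + 1) (fun j k => f k j)
  simp only [sum_Ico_eq_sum_range, Nat.sub_zero, zero_add] at h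
  exact h.symm

/-- The terminating series `∑ₖ (-n)ₖ (a)ₖ (b)ₖ / ((c)ₖ (d)ₖ k!)` multiplied by `(c)ₙ (d)ₙ`. -/
noncomputable def clearedSum (n : ℕ) (a b c d : ℝ) : ℝ :=
  ∑ k ∈ range (n + 1),
    (-1) ^ k * n.choose k * poch a k * poch b k * poch (c + k) (n - k) * poch (d + k) (n - k)

lemma sum_series_eq_clearedSum (n : ℕ) (a b : ℝ) {c d : ℝ} (hc : poch c n ≠ 0)
    (hd : poch d n ≠ 0) :
    ∑ k ∈ range (n + 1), poch (-(n : ℝ)) k * poch a k * poch b k /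
        (poch c k * poch d k * (k.factorial : ℝ)) =
      clearedSum n a b c d / (poch c n * poch d n) := by
  rw [clearedSum, sum_div]
  refine sum_congr rfl fun k hk => ?_
  have hkn := Nat.lt_succ_iff.mp (mem_range.mp hk)
  rw [poch_eq_mul_poch_of_le c hkn] at hc ⊢
  rw [poch_eq_mul_poch_of_le d hkn] at hd ⊢
  obtain ⟨hck, hck'⟩ := mul_ne_zero_iff.mp hc
  obtain ⟨hdk, hdk'⟩ := mul_ne_zero_iff.mp hd
  rw [poch_neg_natCast, Nat.descFactorial_eq_factorial_mul_choose]
  field_simp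
  push_cast
  ring

lemma clearedSum_sub_eq_sum (n : ℕ) (a b d A : ℝ) :
    clearedSum n a (d - b) d A =
      ∑ j ∈ range (n + 1),
        n.choose j * poch a j * poch b j * poch (d + j) (n - j) * poch (A - a) (n - j) := by
  simp only [clearedSum, poch_sub_eq_sum b d, mul_sum, sum_mul]
  rw [sum_range_sum_range_comm]
  refine sum_congr rfl fun j hj => ?_
  obtain ⟨r, rfl⟩ := Nat.exists_eq_add_of_le (Nat.lt_succ_iff.mp (mem_range.mp hj))
  rw [show A - a = (A + j) - (a + j) by ring, Nat.add_sub_cancel_left, poch_sub_eq_sum, mul_sum,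
    show j + r + 1 - j = r + 1 by omega]
  refine sum_congr rfl fun m hm => ?_
  obtain ⟨l, rfl⟩ := Nat.exists_eq_add_of_le (Nat.lt_succ_iff.mp (mem_range.mp hm))
  simp only [Nat.add_sub_cancel_left, add_assoc]
  have hsign : ((-1 : ℝ) ^ j) ^ 2 = 1 := by rw [← pow_mul, pow_mul', neg_one_sq, one_pow]
  have hchoose : ((j + (m + l)).choose (j + m) * (j + m).choose j : ℝ) =
      (j + (m + l)).choose j * (m + l).choose m := by
    have h := Nat.choose_mul (n := j + (m + l)) (k := j + m) (s := j) (by omega)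
    rw [Nat.add_sub_cancel_left, Nat.add_sub_cancel_left] at h
    exact_mod_cast h
  rw [show j + (m + l) - (j + m) = l by omega, poch_add a, poch_add (d + j) m l, pow_add]
  push_cast
  grind

lemma clearedSum_sub_eq_neg_one_pow_mul (n : ℕ) (a b c d : ℝ) :
    clearedSum n a (d - b) d (a - c - n + 1) = (-1) ^ n * clearedSum n a b c d := by
  rw [clearedSum_sub_eq_sum, clearedSum, mul_sum]
  refine sum_congr rfl fun j hj => ?_
  obtain ⟨r, rfl⟩ := Nat.exists_eq_add_of_le (Nat.lt_succ_iff.mp (mem_range.mp hj))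
  have hsign : ((-1 : ℝ) ^ j) ^ 2 = 1 := by rw [← pow_mul, pow_mul', neg_one_sq, one_pow]
  rw [Nat.add_sub_cancel_left, poch_eq_neg_one_pow_mul_poch (a - c - _ + 1 - a),
    show 1 - (a - c - ((j + r : ℕ) : ℝ) + 1 - a) - r = c + j by push_cast; ring, pow_add]
  grind

theorem thomae_A6 (n : ℕ) (a b c d : ℝ)
    (hc : ∀ k ≤ n, poch c k ≠ 0) (hd : ∀ k ≤ n, poch d k ≠ 0)
    (h1 : ∀ k ≤ n, poch (a - c - n + 1) k ≠ 0) :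
    ∑ k ∈ Finset.range (n + 1),
        (poch (-(n : ℝ)) k * poch a k * poch b k) /
          (poch c k * poch d k * (k.factorial : ℝ)) =
      poch (c - a) n / poch c n *
        ∑ k ∈ Finset.range (n + 1),
          (poch (-(n : ℝ)) k * poch a k * poch (d - b) k) /
            (poch d k * poch (a - c - n + 1) k * (k.factorial : ℝ)) := by
  have hA := h1 n le_rfl
  have hreflect : poch (a - c - n + 1) n = (-1) ^ n * poch (c - a) n := by
    rw [poch_eq_neg_one_pow_mul_poch, show 1 - (a - c - n + 1) - n = c - a by ring]
  have hca : poch (c - a) n ≠ 0 := right_ne_zero_of_mul (hreflect ▸ hA)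
  rw [sum_series_eq_clearedSum n a b (hc n le_rfl) (hd n le_rfl),
    sum_series_eq_clearedSum n a (d - b) (hd n le_rfl) hA,
    clearedSum_sub_eq_neg_one_pow_mul, hreflect]
  field_simp
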